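/- arXiv:2308.15465 — 2 statements merged into one kernel-verified Lean document; each statement's English description precedes it below -/
import Mathlib

section
/- Two universe level expressions are equivalent under the equational theory (generated by associativity and commutativity of max, distribution of successor over max, max with successor idempotence l ⊔ S l ≃ S l, neutrality of 0, and idempotence of max) if and only if they have the same value under every assignment of natural numbers to their variables, where 0, S, and ⊔ are interpreted as zero, successor, and binary maximum on ℕ. -/
/-- Universe level expressions: `l ::= i | 0 | S l | l ⊔ l'`. -/
inductive Lvl : Type
  | var : ℕ → Lvl
  | zero : Lvl
  | succ : Lvl → Lvl
  | max : Lvl → Lvl → Lvl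
  deriving DecidableEq

namespace Lvl

/-- Interpretation of a level under an assignment `φ` of naturals to variables:
`0`, `S` and `⊔` are interpreted as zero, successor and binary maximum on `ℕ`. -/
def eval (φ : ℕ → ℕ) : Lvl → ℕ
  | .var i => φ i
  | .zero => 0
  | .succ l => l.eval φ + 1
  | .max a b => Nat.max (a.eval φ) (b.eval φ)

end Lvl

/-- The equational theory of universe levels: the least congruence (closed under
contexts and under substitution, since the axioms are stated schematically for
arbitrary levels) generated by associativity and commutativity of `⊔`,
distribution of `S` over `⊔`, `l ⊔ S l ≃ S l`, `l ⊔ 0 ≃ l` and `l ⊔ l ≃ l`. -/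
inductive LvlEq : Lvl → Lvl → Prop
  | refl (l : Lvl) : LvlEq l l
  | symm {a b : Lvl} : LvlEq a b → LvlEq b a
  | trans {a b c : Lvl} : LvlEq a b → LvlEq b c → LvlEq a c
  | succ_congr {a b : Lvl} : LvlEq a b → LvlEq (.succ a) (.succ b)
  | max_congr {a b a' b' : Lvl} : LvlEq a b → LvlEq a' b' →
      LvlEq (.max a a') (.max b b')
  | max_assoc (a b c : Lvl) : LvlEq (.max a (.max b c)) (.max (.max a b) c)
  | max_comm (a b : Lvl) : LvlEq (.max a b) (.max b a)
  | succ_max (a b : Lvl) : LvlEq (.succ (.max a b)) (.max (.succ a) (.succ b))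
  | max_succ (a : Lvl) : LvlEq (.max a (.succ a)) (.succ a)
  | max_zero (a : Lvl) : LvlEq (.max a .zero) a
  | max_idem (a : Lvl) : LvlEq (.max a a) a

/-!
Every level is, up to `≃`, the maximum of its *atoms* `S^k 0` and `S^k i`. For the syntactic
preorder `a ≼ b :⇔ a ⊔ b ≃ b` (`LvlLe`) one has `S^k x ≼ S^m y` whenever `k ≤ m` and `x` is `0`
or `y`, so `l ≼ l'` as soon as every atom of `l` is dominated in this sense by an atom of `l'`.
Conversely, if `⟦l⟧ ≤ ⟦l'⟧` pointwise, evaluating at `0` shows that an atom `S^k 0` of `l` is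
dominated, and evaluating with `i` sent above every offset occurring in `l'` shows the same for
an atom `S^k i`. Hence `l ≼ l'` iff `⟦l⟧ ≤ ⟦l'⟧` pointwise, and the theorem follows by
antisymmetry.
-/

namespace LvlEq

instance : Trans LvlEq LvlEq LvlEq := ⟨LvlEq.trans⟩

theorem eval_eq {a b : Lvl} (h : LvlEq a b) (φ : ℕ → ℕ) : a.eval φ = b.eval φ := by
  induction h <;> simp_all only [Lvl.eval, Nat.max] <;> omega

theorem succ_iterate_max (k : ℕ) (a b : Lvl) :
    LvlEq (Lvl.succ^[k] (.max a b)) (.max (Lvl.succ^[k] a) (Lvl.succ^[k] b)) := by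
  induction k with
  | zero => exact .refl _
  | succ k ih =>
    simp only [Function.iterate_succ_apply']
    exact ih.succ_congr.trans (.succ_max _ _)

end LvlEq

def LvlLe (a b : Lvl) : Prop := LvlEq (.max a b) b

namespace LvlLe

variable {a b c : Lvl}

theorem eval_le (h : LvlLe a b) (φ : ℕ → ℕ) : a.eval φ ≤ b.eval φ := by
  have := LvlEq.eval_eq h φ
  simp only [Lvl.eval, Nat.max] at this
  omega

protected theorem refl (a : Lvl) : LvlLe a a :=
  .max_idem a

theorem of_lvlEq (h : LvlEq a b) : LvlLe a b :=
  LvlEq.trans (.max_congr h (.refl b)) (.max_idem b)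

theorem trans (hab : LvlLe a b) (hbc : LvlLe b c) : LvlLe a c :=
  calc LvlEq (.max a c) (.max a (.max b c)) := .max_congr (.refl a) (.symm hbc)
    LvlEq _ (.max (.max a b) c) := .max_assoc a b c
    LvlEq _ (.max b c) := .max_congr hab (.refl c)
    LvlEq _ c := hbc

instance : Trans LvlLe LvlLe LvlLe := ⟨trans⟩

theorem antisymm (hab : LvlLe a b) (hba : LvlLe b a) : LvlEq a b :=
  LvlEq.trans (.symm hba) (.trans (.max_comm b a) hab)

theorem max_le (hac : LvlLe a c) (hbc : LvlLe b c) : LvlLe (.max a b) c :=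
  calc LvlEq (.max (.max a b) c) (.max a (.max b c)) := .symm (.max_assoc a b c)
    LvlEq _ (.max a c) := .max_congr (.refl a) hbc
    LvlEq _ c := hac

theorem le_max_left (a b : Lvl) : LvlLe a (.max a b) :=
  LvlEq.trans (.max_assoc a a b) (.max_congr (.max_idem a) (.refl b))

theorem le_max_right (a b : Lvl) : LvlLe b (.max a b) :=
  (le_max_left b a).trans (of_lvlEq (.max_comm b a))

theorem zero_le (a : Lvl) : LvlLe .zero a :=
  LvlEq.trans (.max_comm .zero a) (.max_zero a)

theorem le_succ (a : Lvl) : LvlLe a (.succ a) :=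
  .max_succ a

theorem succ_mono (h : LvlLe a b) : LvlLe (.succ a) (.succ b) :=
  LvlEq.trans (.symm (.succ_max a b)) (.succ_congr h)

theorem succ_iterate_mono (k : ℕ) (h : LvlLe a b) : LvlLe (Lvl.succ^[k] a) (Lvl.succ^[k] b) := by
  induction k with
  | zero => exact h
  | succ k ih =>
    simp only [Function.iterate_succ_apply']
    exact ih.succ_mono

theorem le_succ_iterate (k : ℕ) (a : Lvl) : LvlLe a (Lvl.succ^[k] a) := by
  induction k with
  | zero => exact LvlLe.refl a
  | succ k ih =>
    rw [Function.iterate_succ_apply']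
    exact ih.trans (le_succ _)

end LvlLe

theorem Lvl.eval_succ_iterate (φ : ℕ → ℕ) (k : ℕ) (l : Lvl) :
    (Lvl.succ^[k] l).eval φ = l.eval φ + k := by
  induction k with
  | zero => rfl
  | succ k ih => rw [Function.iterate_succ_apply', Lvl.eval, ih, Nat.add_assoc]

/-- The level `S^offset x`, where the base `x` is `0` for `none` and the variable `i` for
`some i`. -/
structure Atom where
  base : Option ℕ
  offset : ℕ

namespace Atom

def toLvl (a : Atom) : Lvl :=
  Lvl.succ^[a.offset] (a.base.elim .zero .var)

def succ (a : Atom) : Atom :=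
  ⟨a.base, a.offset + 1⟩

instance : LE Atom :=
  ⟨fun a b => (a.base = none ∨ a.base = b.base) ∧ a.offset ≤ b.offset⟩

theorem toLvl_succ (a : Atom) : a.succ.toLvl = .succ a.toLvl :=
  Function.iterate_succ_apply' ..

theorem eval_toLvl (φ : ℕ → ℕ) (a : Atom) : a.toLvl.eval φ = a.base.elim 0 φ + a.offset := by
  rcases a with ⟨_ | i, k⟩ <;> simp [toLvl, Lvl.eval_succ_iterate, Lvl.eval]

theorem toLvl_le_toLvl {a b : Atom} (h : a ≤ b) : LvlLe a.toLvl b.toLvl := by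
  obtain ⟨hbase, hoffset⟩ := h
  have base_le : LvlLe (a.base.elim .zero .var) (b.base.elim .zero .var) := by
    rcases hbase with hbase | hbase <;> rw [hbase]
    exacts [LvlLe.zero_le _, LvlLe.refl _]
  obtain ⟨d, hd⟩ := Nat.exists_eq_add_of_le' hoffset
  calc LvlLe a.toLvl (Lvl.succ^[a.offset] (b.base.elim .zero .var)) :=
        LvlLe.succ_iterate_mono _ base_le
    LvlLe _ b.toLvl := by
      rw [toLvl, hd, Function.iterate_add_apply]
      exact LvlLe.le_succ_iterate _ _

end Atom

namespace Lvl

def atoms : Lvl → List Atom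
  | var i => [⟨some i, 0⟩]
  | zero => [⟨none, 0⟩]
  | succ l => l.atoms.map Atom.succ
  | max a b => a.atoms ++ b.atoms

theorem toLvl_le_of_mem_atoms {l : Lvl} {a : Atom} (h : a ∈ l.atoms) : LvlLe a.toLvl l := by
  induction l generalizing a with
  | var | zero =>
    rw [atoms, List.mem_singleton] at h
    subst h
    exact LvlLe.refl _
  | succ l ih =>
    obtain ⟨a, ha, rfl⟩ := List.mem_map.1 h
    rw [Atom.toLvl_succ]
    exact (ih ha).succ_mono
  | max l l' ih ih' =>
    rcases List.mem_append.1 h with h | h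
    exacts [(ih h).trans (LvlLe.le_max_left l l'), (ih' h).trans (LvlLe.le_max_right l l')]

theorem succ_iterate_le_of_forall_mem_atoms {l c : Lvl} (k : ℕ)
    (h : ∀ a ∈ l.atoms, LvlLe (succ^[k] a.toLvl) c) : LvlLe (succ^[k] l) c := by
  induction l generalizing k with
  | var | zero => exact h _ (List.mem_singleton_self _)
  | succ l ih =>
    rw [← Function.iterate_succ_apply]
    refine ih (k + 1) fun a ha => ?_
    rw [Function.iterate_succ_apply, ← Atom.toLvl_succ]
    exact h _ (List.mem_map_of_mem ha)
  | max l l' ih ih' =>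
    refine (LvlLe.of_lvlEq (LvlEq.succ_iterate_max k l l')).trans (LvlLe.max_le ?_ ?_)
    exacts [ih k fun a ha => h a (List.mem_append_left _ ha),
      ih' k fun a ha => h a (List.mem_append_right _ ha)]

theorem exists_mem_atoms_eval_eq (φ : ℕ → ℕ) (l : Lvl) :
    ∃ a ∈ l.atoms, a.toLvl.eval φ = l.eval φ := by
  induction l with
  | var | zero => exact ⟨_, List.mem_singleton_self _, rfl⟩
  | succ l ih =>
    obtain ⟨a, ha, he⟩ := ih
    exact ⟨a.succ, List.mem_map_of_mem ha, by rw [Atom.toLvl_succ, eval, eval, he]⟩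
  | max l l' ih ih' =>
    obtain ⟨a, ha, he⟩ := ih
    obtain ⟨a', ha', he'⟩ := ih'
    rcases le_total (l.eval φ) (l'.eval φ) with hle | hle
    · exact ⟨a', List.mem_append_right _ ha', by simp only [eval, Nat.max]; omega⟩
    · exact ⟨a, List.mem_append_left _ ha, by simp only [eval, Nat.max]; omega⟩

theorem exists_mem_atoms_ge_of_eval_le {l l' : Lvl} (h : ∀ φ, l.eval φ ≤ l'.eval φ) {a : Atom}
    (ha : a ∈ l.atoms) : ∃ b ∈ l'.atoms, a ≤ b := by
  have eval_le (φ : ℕ → ℕ) : a.toLvl.eval φ ≤ l'.eval φ :=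
    ((toLvl_le_of_mem_atoms ha).eval_le φ).trans (h φ)
  have offset_le {b : Atom} (hb : b ∈ l'.atoms) : b.offset ≤ l'.eval 0 := by
    have := (toLvl_le_of_mem_atoms hb).eval_le 0
    rw [Atom.eval_toLvl] at this
    omega
  rcases a with ⟨_ | i, k⟩
  · obtain ⟨b, hb, he⟩ := exists_mem_atoms_eval_eq 0 l'
    have hk := eval_le 0
    rw [← he, Atom.eval_toLvl, Atom.eval_toLvl] at hk
    refine ⟨b, hb, Or.inl rfl, ?_⟩
    rcases b with ⟨_ | j, m⟩ <;> simpa using hk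
  · -- Sending `i` above every offset of `l'` forces an atom of `l'` based on `i` to reach the max.
    set φ : ℕ → ℕ := Function.update 0 i (l'.eval 0 + 1)
    obtain ⟨b, hb, he⟩ := exists_mem_atoms_eval_eq φ l'
    have hk := eval_le φ
    rw [← he, Atom.eval_toLvl, Atom.eval_toLvl] at hk
    have hm := offset_le hb
    rcases b with ⟨_ | j, m⟩
    · simp [φ] at hk hm
      omega
    · by_cases hji : j = i
      · subst hji
        refine ⟨_, hb, Or.inr rfl, ?_⟩
        simpa [φ] using hk
      · simp [φ, hji] at hk hm
        omega

end Lvl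

theorem lvlLe_iff_eval_le {l l' : Lvl} : LvlLe l l' ↔ ∀ φ, l.eval φ ≤ l'.eval φ := by
  refine ⟨LvlLe.eval_le, fun h => Lvl.succ_iterate_le_of_forall_mem_atoms 0 fun a ha => ?_⟩
  obtain ⟨b, hb, hab⟩ := Lvl.exists_mem_atoms_ge_of_eval_le h ha
  exact (Atom.toLvl_le_toLvl hab).trans (Lvl.toLvl_le_of_mem_atoms hb)

/-- Two universe level expressions are equivalent under the equational theory iff
they have the same value under every assignment of naturals to their variables. -/
theorem lvlEq_iff_semantic (l l' : Lvl) :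
    LvlEq l l' ↔ ∀ φ : ℕ → ℕ, l.eval φ = l'.eval φ :=
  ⟨fun h φ => h.eval_eq φ, fun h => LvlLe.antisymm
    (lvlLe_iff_eval_le.2 fun φ => (h φ).le) (lvlLe_iff_eval_le.2 fun φ => (h φ).ge)⟩
end

section
/- Let (▶, ∼) be an abstract equational rewrite system, where ▶ is a binary relation on a set X and ∼ an equivalence relation on X. If ▶ is confluent and ∼ is a simulation with respect to ▶ (i.e., whenever t ∼ u and u ▶ u', there exists t' with t ▶ t' and t' ∼ u'), then the system is Church-Rosser modulo: x (▶ ∪ ◀ ∪ ∼)* y implies x ▶* z₁ ∼ z₂ ◀* y for some z₁, z₂, where ◀ is the inverse of ▶. -/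
/-!
Call `a` and `b` joinable modulo `e` if `a →* z₁ ∼ z₂ *← b`. This relation is an equivalence:
to compose `a →* z₁ ∼ z₂ *← b` with `b →* z₃ ∼ z₄ *← c`, join `z₂` and `z₃` at some `w` by
confluence, then transport the reductions `z₂ →* w` and `z₃ →* w` along `z₁ ∼ z₂` and
`z₄ ∼ z₃` by the simulation property. It contains `r` and `e`, hence their
reflexive-transitive symmetric closure.
-/

namespace Relation

variable {X : Type*} {r e : X → X → Prop}

theorem ReflTransGen.exists_of_simulation (hsim : ∀ t u u', e t u → r u u' → ∃ t', r t t' ∧ e t' u')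
    {t u u' : X} (htu : e t u) (h : ReflTransGen r u u') :
    ∃ t', ReflTransGen r t t' ∧ e t' u' := by
  induction h with
  | refl => exact ⟨t, .refl, htu⟩
  | tail _ hstep ih =>
    obtain ⟨t', ht', he'⟩ := ih
    obtain ⟨t'', ht'', he''⟩ := hsim _ _ _ he' hstep
    exact ⟨t'', ht'.tail ht'', he''⟩

variable (r e) in
def JoinModulo (a b : X) : Prop :=
  ∃ z₁ z₂, ReflTransGen r a z₁ ∧ e z₁ z₂ ∧ ReflTransGen r b z₂

theorem equivalence_joinModulo (heq : Equivalence e)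
    (hconf : ∀ x y z, ReflTransGen r x y → ReflTransGen r x z →
      ∃ w, ReflTransGen r y w ∧ ReflTransGen r z w)
    (hsim : ∀ t u u', e t u → r u u' → ∃ t', r t t' ∧ e t' u') :
    Equivalence (JoinModulo r e) where
  refl a := ⟨a, a, .refl, heq.refl a, .refl⟩
  symm := fun ⟨z₁, z₂, ha, he, hb⟩ => ⟨z₂, z₁, hb, heq.symm he, ha⟩
  trans := fun ⟨z₁, z₂, ha, he₁₂, hb₂⟩ ⟨z₃, z₄, hb₃, he₃₄, hc⟩ => by
    obtain ⟨w, hz₂w, hz₃w⟩ := hconf _ _ _ hb₂ hb₃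
    obtain ⟨z₁', hz₁', he₁⟩ := hz₂w.exists_of_simulation hsim he₁₂
    obtain ⟨z₄', hz₄', he₄⟩ := hz₃w.exists_of_simulation hsim (heq.symm he₃₄)
    exact ⟨z₁', z₄', ha.trans hz₁', heq.trans he₁ (heq.symm he₄), hc.trans hz₄'⟩

theorem JoinModulo.of_rel (heq : Equivalence e) {a b : X} (hab : r a b) : JoinModulo r e a b :=
  ⟨b, b, .single hab, heq.refl b, .refl⟩

theorem JoinModulo.of_equiv {a b : X} (hab : e a b) : JoinModulo r e a b :=
  ⟨a, b, .refl, hab, .refl⟩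

end Relation

/-- Abstract Church-Rosser modulo: if `r` is confluent and the equivalence `e` is a
simulation with respect to `r`, then the abstract equational rewrite system `(r, e)`
is Church-Rosser modulo. -/
theorem church_rosser_modulo {X : Type*} (r e : X → X → Prop)
    (heq : Equivalence e)
    (hconf : ∀ x y z, Relation.ReflTransGen r x y → Relation.ReflTransGen r x z →
      ∃ w, Relation.ReflTransGen r y w ∧ Relation.ReflTransGen r z w)
    (hsim : ∀ t u u', e t u → r u u' → ∃ t', r t t' ∧ e t' u')
    (x y : X)
    (h : Relation.ReflTransGen (fun a b => r a b ∨ r b a ∨ e a b) x y) :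
    ∃ z₁ z₂, Relation.ReflTransGen r x z₁ ∧ e z₁ z₂ ∧ Relation.ReflTransGen r y z₂ := by
  have hjoin := Relation.equivalence_joinModulo heq hconf hsim
  induction h with
  | refl => exact hjoin.refl x
  | tail _ hstep ih =>
    refine hjoin.trans ih ?_
    rcases hstep with hr | hr | he
    · exact .of_rel heq hr
    · exact hjoin.symm (.of_rel heq hr)
    · exact .of_equiv he
end
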